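/- Let M be the restriction of the composition w2 ∘ w3 ∘ w2 ∘ w1 (applying w1 first) to the sublattice ℤα1 + ℤα2 + ℤα3; this restriction is well defined and satisfies M(α1) = −α1 − 12α2 − 6α3, M(α2) = 2α1 + 21α2 + 10α3, M(α3) = 2α1 + 28α2 + 15α3. The characteristic polynomial of M is (X − 1)(X² − 34X + 1), and 17 + 12√2 is an eigenvalue of M equal to its spectral radius. (The mapping w2∘w3∘w2∘w1 satisfies the singularity confinement criterion and has algebraic entropy log(17 + 12√2).) -/

import Mathlib

/-- The Picard lattice of the space of initial values of the HV equation: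
the free ℤ-module of rank 16 with basis `H0, H1, E1, …, E14`. -/
abbrev Pic : Type := Fin 16 → ℤ

/-- The class `H0` (total transform of a line `x = const`). -/
def H0 : Pic := Pi.single 0 1

/-- The class `H1` (total transform of a line `y = const`). -/
def H1 : Pic := Pi.single 1 1

/-- The exceptional classes: `E k` is the paper's `E_{k+1}` for `k : Fin 14`. -/
def E (k : Fin 14) : Pic := Pi.single k.succ.succ 1

/-- The intersection form: `H0·H1 = 1`, `H0·H0 = H1·H1 = 0`, `Ek·El = -δ`, `Hi·Ek = 0`. -/
def ip (u v : Pic) : ℤ :=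
  u 0 * v 1 + u 1 * v 0 - ∑ k : Fin 14, u k.succ.succ * v k.succ.succ

/-- The canonical class `K = -2H0 - 2H1 + E1 + ⋯ + E14`. -/
def KX : Pic := (-2 : ℤ) • H0 + (-2 : ℤ) • H1 + ∑ k : Fin 14, E k

/-- The classes `D0, …, D12` of the irreducible components of `-K`. -/
def D : Fin 13 → Pic :=
  ![E 0 - E 1, E 1 - E 2, E 2 - E 3,
    E 4 - E 5, E 5 - E 6, E 6 - E 7,
    E 8 - E 9, E 10 - E 11, E 11 - E 12, E 12 - E 13,
    H0 - E 0 - E 1 - E 8, H1 - E 4 - E 5 - E 8, E 9 - E 10 - E 11]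

/-- The root basis `α1, α2, α3` of the orthogonal complement of the `D`'s. -/
def α : Fin 3 → Pic :=
  ![(2 : ℤ) • H1 - E 0 - E 1 - E 2 - E 3,
    (2 : ℤ) • H0 - E 4 - E 5 - E 6 - E 7,
    (2 : ℤ) • H0 + (2 : ℤ) • H1 - (2 : ℤ) • E 8 - (2 : ℤ) • E 9 - E 10 - E 11 - E 12 - E 13]

/-- The ℤ-linear map sending the `j`-th basis vector to `f j`. -/
def ofImages (f : Fin 16 → Pic) : Pic →ₗ[ℤ] Pic :=
  Matrix.toLin' (Matrix.of fun i j => f j i)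

/-- The generator `w1`. -/
def w1 : Pic →ₗ[ℤ] Pic := ofImages
  ![H0 + (2 : ℤ) • H1 - E 0 - E 1 - E 2 - E 3, H1,
    H1 - E 3, H1 - E 2, H1 - E 1, H1 - E 0,
    E 4, E 5, E 6, E 7, E 8, E 9, E 10, E 11, E 12, E 13]

/-- The generator `w2`. -/
def w2 : Pic →ₗ[ℤ] Pic := ofImages
  ![H0, (2 : ℤ) • H0 + H1 - E 4 - E 5 - E 6 - E 7,
    E 0, E 1, E 2, E 3,
    H0 - E 7, H0 - E 6, H0 - E 5, H0 - E 4,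
    E 8, E 9, E 10, E 11, E 12, E 13]

/-- The generator `w3`. -/
def w3 : Pic →ₗ[ℤ] Pic := ofImages
  ![H0 + α 2, H1 + α 2,
    E 0, E 1, E 2, E 3, E 4, E 5, E 6, E 7,
    E 8 + α 2, E 9 + α 2,
    E 10 + (H0 + H1 - E 8 - E 9 - E 10 - E 13),
    E 11 + (H0 + H1 - E 8 - E 9 - E 11 - E 12),
    E 12 + (H0 + H1 - E 8 - E 9 - E 11 - E 12),
    E 13 + (H0 + H1 - E 8 - E 9 - E 10 - E 13)]

/-- The generator `σ12`. -/
def s12 : Pic →ₗ[ℤ] Pic := ofImages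
  ![H1, H0, E 4, E 5, E 6, E 7, E 0, E 1, E 2, E 3,
    E 8, E 9, E 10, E 11, E 12, E 13]

/-- The generator `σ13`. -/
def s13 : Pic →ₗ[ℤ] Pic := ofImages
  ![H0, H0 + H1 - E 8 - E 9,
    E 10, E 11, E 12, E 13,
    E 4, E 5, E 6, E 7,
    H0 - E 9, H0 - E 8,
    E 0, E 1, E 2, E 3]

/-- The action `φ` of the Hietarinta–Viallet equation on the Picard lattice. -/
def phiHV : Pic →ₗ[ℤ] Pic := ofImages
  ![(3 : ℤ) • H0 + H1 - E 4 - E 5 - E 6 - E 7 - E 8 - E 9, H0,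
    H0 - E 7, H0 - E 6, H0 - E 5, H0 - E 4,
    E 10, E 11, E 12, E 13,
    H0 - E 9, H0 - E 8,
    E 0, E 1, E 2, E 3]

/-- The composition `w2 ∘ w3 ∘ w2 ∘ w1` (applying `w1` first). -/
def MEnd : Module.End ℤ Pic := w2 ∘ₗ w3 ∘ₗ w2 ∘ₗ w1

/-- The matrix of the restriction of `w2 ∘ w3 ∘ w2 ∘ w1` to `ℤα1 + ℤα2 + ℤα3` in the
basis `α1, α2, α3` (columns are the images of the basis vectors). -/
def Mmat : Matrix (Fin 3) (Fin 3) ℤ := !![-1, 2, 2; -12, 21, 28; -6, 10, 15]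

open Polynomial in
/-- The restriction of `w2 ∘ w3 ∘ w2 ∘ w1` to the sublattice `ℤα1 + ℤα2 + ℤα3` is well
defined, sends `α1 ↦ −α1−12α2−6α3`, `α2 ↦ 2α1+21α2+10α3`, `α3 ↦ 2α1+28α2+15α3`; its
characteristic polynomial is `(X − 1)(X² − 34X + 1)`, and `17 + 12√2` is an eigenvalue
equal to the spectral radius (every complex root of the characteristic polynomial has
modulus at most `17 + 12√2`).  Hence `w2∘w3∘w2∘w1` has algebraic entropy
`log (17 + 12√2)`. -/
theorem w2w3w2w1_spectral :
    (∀ v ∈ Submodule.span ℤ ({α 0, α 1, α 2} : Set Pic),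
      MEnd v ∈ Submodule.span ℤ ({α 0, α 1, α 2} : Set Pic)) ∧
    MEnd (α 0) = -α 0 - (12 : ℤ) • α 1 - (6 : ℤ) • α 2 ∧
    MEnd (α 1) = (2 : ℤ) • α 0 + (21 : ℤ) • α 1 + (10 : ℤ) • α 2 ∧
    MEnd (α 2) = (2 : ℤ) • α 0 + (28 : ℤ) • α 1 + (15 : ℤ) • α 2 ∧
    Mmat.charpoly = (X - 1) * (X ^ 2 - 34 * X + 1) ∧
    Module.End.HasEigenvalue
      (Matrix.toLin' (Mmat.map (Int.cast : ℤ → ℝ))) (17 + 12 * Real.sqrt 2) ∧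
    (∀ z : ℂ, Polynomial.aeval z Mmat.charpoly = 0 →
      ‖z‖ ≤ 17 + 12 * Real.sqrt 2) := by
  have h0 : MEnd (α 0) = -α 0 - (12 : ℤ) • α 1 - (6 : ℤ) • α 2 := by decide
  have h1 : MEnd (α 1) = (2 : ℤ) • α 0 + (21 : ℤ) • α 1 + (10 : ℤ) • α 2 := by decide
  have h2 : MEnd (α 2) = (2 : ℤ) • α 0 + (28 : ℤ) • α 1 + (15 : ℤ) • α 2 := by decide
  have hcp : Mmat.charpoly = (X - 1) * (X ^ 2 - 34 * X + 1) := by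
    rw [Matrix.charpoly, Matrix.det_fin_three]
    simp [Mmat, Matrix.charmatrix_apply_eq, Matrix.charmatrix_apply_ne]
    ring
  have sqrt2_nonneg : (0:ℝ) ≤ Real.sqrt 2 := Real.sqrt_nonneg 2
  have hs2 : Real.sqrt 2 ^ 2 = 2 := Real.sq_sqrt (by norm_num)
  set μ : ℝ := 17 + 12 * Real.sqrt 2 with hμdef
  have hμ : μ ^ 2 - 34 * μ + 1 = 0 := by rw [hμdef]; nlinarith [hs2]
  refine ⟨?_, h0, h1, h2, hcp, ?_, ?_⟩
  · intro v hv
    have mem0 : α 0 ∈ Submodule.span ℤ ({α 0, α 1, α 2} : Set Pic) :=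
      Submodule.subset_span (by simp)
    have mem1 : α 1 ∈ Submodule.span ℤ ({α 0, α 1, α 2} : Set Pic) :=
      Submodule.subset_span (by simp)
    have mem2 : α 2 ∈ Submodule.span ℤ ({α 0, α 1, α 2} : Set Pic) :=
      Submodule.subset_span (by simp)
    induction hv using Submodule.span_induction with
    | mem x hx =>
        rcases hx with h | h | h
        · rw [h, h0]
          exact Submodule.sub_mem _ (Submodule.sub_mem _ (Submodule.neg_mem _ mem0)
            (Submodule.smul_mem _ _ mem1)) (Submodule.smul_mem _ _ mem2)
        · rw [h, h1]
          exact Submodule.add_mem _ (Submodule.add_mem _ (Submodule.smul_mem _ _ mem0)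
            (Submodule.smul_mem _ _ mem1)) (Submodule.smul_mem _ _ mem2)
        · rw [h, h2]
          exact Submodule.add_mem _ (Submodule.add_mem _ (Submodule.smul_mem _ _ mem0)
            (Submodule.smul_mem _ _ mem1)) (Submodule.smul_mem _ _ mem2)
    | zero => simp
    | add x y _ _ hx hy => rw [map_add]; exact Submodule.add_mem _ hx hy
    | smul c x _ hx => rw [map_smul]; exact Submodule.smul_mem _ _ hx
  · set A : Matrix (Fin 3) (Fin 3) ℝ := Mmat.map (Int.cast : ℤ → ℝ) with hA
    have hdet : (A - μ • 1).det = 0 := by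
      rw [Matrix.det_fin_three]
      simp [hA, Mmat, Matrix.one_apply]
      linear_combination (1 - μ) * hμ
    obtain ⟨v, hv0, hv⟩ := (Matrix.exists_mulVec_eq_zero_iff).mpr hdet
    refine Module.End.hasEigenvalue_of_hasEigenvector ⟨?_, hv0⟩
    rw [Module.End.mem_eigenspace_iff, Matrix.toLin'_apply]
    have := hv
    rw [Matrix.sub_mulVec, Matrix.smul_mulVec, Matrix.one_mulVec, sub_eq_zero] at this
    exact this
  · intro z hz
    rw [hcp] at hz
    simp only [map_mul, map_add, map_sub, map_pow, map_one, aeval_X, map_ofNat] at hz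
    rcases mul_eq_zero.mp hz with h | h
    · have : z = 1 := by linear_combination h
      rw [this]
      simp only [norm_one]
      nlinarith [sqrt2_nonneg]
    · have hq : z ^ 2 - 34 * z + 1 = 0 := h
      set c : ℂ := ((12 * Real.sqrt 2 : ℝ) : ℂ) with hc
      have hc2 : c ^ 2 = 288 := by
        rw [hc, ← Complex.ofReal_pow]
        norm_num [mul_pow, hs2]
      have hfac : (z - 17 - c) * (z - 17 + c) = 0 := by
        linear_combination hq - hc2
      have h1712 : 12 * Real.sqrt 2 ≤ 17 := by nlinarith [hs2, sqrt2_nonneg]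
      rcases mul_eq_zero.mp hfac with h' | h'
      · have : z = ((17 + 12 * Real.sqrt 2 : ℝ) : ℂ) := by
          rw [Complex.ofReal_add]; push_cast [hc] at h' ⊢; linear_combination h'
        rw [this, Complex.norm_real, Real.norm_eq_abs, hμdef]
        rw [abs_of_nonneg (by nlinarith)]
      · have : z = ((17 - 12 * Real.sqrt 2 : ℝ) : ℂ) := by
          rw [Complex.ofReal_sub]; push_cast [hc] at h' ⊢; linear_combination h'
        rw [this, Complex.norm_real, Real.norm_eq_abs, hμdef]
        rw [abs_of_nonneg (by nlinarith)]
        nlinarith
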